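/- arXiv:q-alg/9610005 — 3 statements merged into one kernel-verified Lean document; each statement's English description precedes it below -/
import Mathlib

section
/- Let H be a cocommutative Hopf algebra and F an invertible element of H[[h]]⊗H[[h]] with (ε⊗id)F = 1 = (id⊗ε)F. Define φ := ((Δ⊗id)(F⁻¹))·(F⁻¹⊗1)·(1⊗F)·((id⊗Δ)(F)) and suppose F·Δ(x)·F⁻¹ defines a coproduct Δ_h that satisfies (Δ_h⊗id)∘Δ_h(x)·φ = φ·(id⊗Δ_h)∘Δ_h(x) for all x. If φ commutes with the image of the twofold coproduct Δ⁽²⁾(H), then Δ_h is coassociative. -/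
open TensorProduct

section Aux

variable (R : Type*) [CommRing R] (H : Type*) [Ring H] [HopfAlgebra R H]

lemma rT_comul_eq :
    LinearMap.rTensor H (Coalgebra.comul (R := R) (A := H))
      = (Algebra.TensorProduct.map (Bialgebra.comulAlgHom R H) (AlgHom.id R H)).toLinearMap := by
  ext a b
  simp [Bialgebra.comulAlgHom_apply]

lemma lT_comul_eq :
    LinearMap.lTensor H (Coalgebra.comul (R := R) (A := H))
      = (Algebra.TensorProduct.map (AlgHom.id R H) (Bialgebra.comulAlgHom R H)).toLinearMap := by
  ext a b
  simp [Bialgebra.comulAlgHom_apply]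

lemma rT_comul_mul (x y : H ⊗[R] H) :
    LinearMap.rTensor H (Coalgebra.comul (R := R) (A := H)) (x * y)
      = LinearMap.rTensor H Coalgebra.comul x * LinearMap.rTensor H Coalgebra.comul y := by
  rw [rT_comul_eq]; exact map_mul (Algebra.TensorProduct.map (Bialgebra.comulAlgHom R H) (AlgHom.id R H)) x y

lemma lT_comul_mul (x y : H ⊗[R] H) :
    LinearMap.lTensor H (Coalgebra.comul (R := R) (A := H)) (x * y)
      = LinearMap.lTensor H Coalgebra.comul x * LinearMap.lTensor H Coalgebra.comul y := by
  rw [lT_comul_eq]; exact map_mul (Algebra.TensorProduct.map (AlgHom.id R H) (Bialgebra.comulAlgHom R H)) x y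

lemma lT_comul_one :
    LinearMap.lTensor H (Coalgebra.comul (R := R) (A := H)) 1 = 1 := by
  rw [lT_comul_eq]; exact map_one (Algebra.TensorProduct.map (AlgHom.id R H) (Bialgebra.comulAlgHom R H))

lemma assoc_eq (z : (H ⊗[R] H) ⊗[R] H) :
    (TensorProduct.assoc R H H H) z = (Algebra.TensorProduct.assoc R R R H H H) z := by
  have : (TensorProduct.assoc R H H H).toLinearMap
      = (Algebra.TensorProduct.assoc R R R H H H).toLinearMap := by
    ext a b c
    simp
  exact LinearMap.congr_fun this z

lemma rT_mulLeft (c : H ⊗[R] H) :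
    LinearMap.rTensor H (LinearMap.mulLeft R c)
      = LinearMap.mulLeft R (c ⊗ₜ[R] (1 : H)) := by
  ext a b
  simp [Algebra.TensorProduct.tmul_mul_tmul]

lemma rT_mulRight (c : H ⊗[R] H) :
    LinearMap.rTensor H (LinearMap.mulRight R c)
      = LinearMap.mulRight R (c ⊗ₜ[R] (1 : H)) := by
  ext a b
  simp [Algebra.TensorProduct.tmul_mul_tmul]

lemma lT_mulLeft (c : H ⊗[R] H) :
    LinearMap.lTensor H (LinearMap.mulLeft R c)
      = LinearMap.mulLeft R ((1 : H) ⊗ₜ[R] c) := by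
  ext a b
  simp [Algebra.TensorProduct.tmul_mul_tmul]

lemma lT_mulRight (c : H ⊗[R] H) :
    LinearMap.lTensor H (LinearMap.mulRight R c)
      = LinearMap.mulRight R ((1 : H) ⊗ₜ[R] c) := by
  ext a b
  simp [Algebra.TensorProduct.tmul_mul_tmul]

end Aux

lemma aux_monoid {M : Type*} [Monoid M] (p pi q qi d : M)
    (hp : p * pi = 1) (hq : q * qi = 1)
    (hcomm : (pi * q) * d = d * (pi * q)) : p * d * pi = q * d * qi := by
  symm
  calc q * d * qi = (p * pi) * q * d * qi := by rw [hp, one_mul]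
    _ = p * ((pi * q) * d) * qi := by simp [mul_assoc]
    _ = p * (d * (pi * q)) * qi := by rw [hcomm]
    _ = p * d * pi * (q * qi) := by simp [mul_assoc]
    _ = p * d * pi := by rw [hq, mul_one]

theorem stmt_5_aux (R : Type*) [CommRing R] (H : Type*) [Ring H] [HopfAlgebra R H]
    (F Finv : H ⊗[R] H)
    (hFinv : F * Finv = 1 ∧ Finv * F = 1)
    (φ : H ⊗[R] (H ⊗[R] H))
    (hφ : φ =
      (Algebra.TensorProduct.assoc R R R H H H) ((LinearMap.rTensor H Coalgebra.comul) Finv) *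
      (Algebra.TensorProduct.assoc R R R H H H) (Finv ⊗ₜ[R] (1 : H)) *
      ((1 : H) ⊗ₜ[R] F) *
      ((LinearMap.lTensor H Coalgebra.comul) F))
    (Δh : H →ₗ[R] H ⊗[R] H)
    (hΔh : Δh = (LinearMap.mulRight R Finv) ∘ₗ (LinearMap.mulLeft R F) ∘ₗ Coalgebra.comul)
    (hφcomm : ∀ x : H,
      φ * (Algebra.TensorProduct.assoc R R R H H H)
          ((LinearMap.rTensor H Coalgebra.comul) (Coalgebra.comul x)) =
      (Algebra.TensorProduct.assoc R R R H H H)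
          ((LinearMap.rTensor H Coalgebra.comul) (Coalgebra.comul x)) * φ) :
    ∀ x : H,
      (TensorProduct.assoc R H H H) ((LinearMap.rTensor H Δh) (Δh x)) =
        (LinearMap.lTensor H Δh) (Δh x) := by
  intro x
  set A := Algebra.TensorProduct.assoc R R R H H H with hA
  set rc := LinearMap.rTensor H (Coalgebra.comul (R := R) (A := H)) with hrc
  set lc := LinearMap.lTensor H (Coalgebra.comul (R := R) (A := H)) with hlc
  -- Δh x as a product
  have hΔhx : ∀ z : H, Δh z = F * Coalgebra.comul z * Finv := by
    intro z
    simp [hΔh, LinearMap.mulLeft_apply, LinearMap.mulRight_apply, mul_assoc]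
  -- L side
  have hrTΔh : ∀ z : H ⊗[R] H, LinearMap.rTensor H Δh z
      = (F ⊗ₜ[R] (1:H)) * rc z * (Finv ⊗ₜ[R] (1:H)) := by
    intro z
    rw [hΔh]
    rw [show LinearMap.rTensor H ((LinearMap.mulRight R Finv) ∘ₗ (LinearMap.mulLeft R F)
        ∘ₗ (Coalgebra.comul (R := R) (A := H)))
      = LinearMap.rTensor H (LinearMap.mulRight R Finv)
        ∘ₗ LinearMap.rTensor H (LinearMap.mulLeft R F) ∘ₗ rc by
        rw [← LinearMap.rTensor_comp, ← LinearMap.rTensor_comp]]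
    simp [rT_mulLeft, rT_mulRight, mul_assoc]
  have hlTΔh : ∀ z : H ⊗[R] H, LinearMap.lTensor H Δh z
      = ((1:H) ⊗ₜ[R] F) * lc z * ((1:H) ⊗ₜ[R] Finv) := by
    intro z
    rw [hΔh]
    rw [show LinearMap.lTensor H ((LinearMap.mulRight R Finv) ∘ₗ (LinearMap.mulLeft R F)
        ∘ₗ (Coalgebra.comul (R := R) (A := H)))
      = LinearMap.lTensor H (LinearMap.mulRight R Finv)
        ∘ₗ LinearMap.lTensor H (LinearMap.mulLeft R F) ∘ₗ lc by
        rw [← LinearMap.lTensor_comp, ← LinearMap.lTensor_comp]]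
    simp [lT_mulLeft, lT_mulRight, mul_assoc]
  -- coassociativity
  have hcoassoc : lc (Coalgebra.comul x) = A (rc (Coalgebra.comul x)) := by
    rw [← assoc_eq]
    exact (Coalgebra.coassoc_apply x).symm
  set d := A (rc (Coalgebra.comul x)) with hd
  -- compute LHS
  have hL : (TensorProduct.assoc R H H H) ((LinearMap.rTensor H Δh) (Δh x))
      = (A (F ⊗ₜ[R] (1:H)) * A (rc F)) * d * (A (rc Finv) * A (Finv ⊗ₜ[R] (1:H))) := by
    rw [hrTΔh, hΔhx, assoc_eq, hrc, rT_comul_mul, rT_comul_mul]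
    simp only [map_mul, hA]
    simp [mul_assoc]; rfl
  have hR : (LinearMap.lTensor H Δh) (Δh x)
      = (((1:H) ⊗ₜ[R] F) * lc F) * d * (lc Finv * ((1:H) ⊗ₜ[R] Finv)) := by
    rw [hlTΔh, hΔhx, hlc, lT_comul_mul, lT_comul_mul, hcoassoc]
    simp [mul_assoc]
  rw [hL, hR]
  apply aux_monoid
  · -- P * Pinv = 1
    rw [show A (F ⊗ₜ[R] (1:H)) * A (rc F) * (A (rc Finv) * A (Finv ⊗ₜ[R] (1:H)))
      = A ((F ⊗ₜ[R] (1:H)) * (rc (F * Finv)) * (Finv ⊗ₜ[R] (1:H))) by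
        rw [rT_comul_mul]; simp [mul_assoc]; rfl]
    rw [hFinv.1, hrc]
    rw [show LinearMap.rTensor H (Coalgebra.comul (R := R) (A := H)) 1
      = (1 : (H ⊗[R] H) ⊗[R] H) by rw [rT_comul_eq]; exact map_one (Algebra.TensorProduct.map (Bialgebra.comulAlgHom R H) (AlgHom.id R H))]
    rw [mul_one, Algebra.TensorProduct.tmul_mul_tmul, hFinv.1, one_mul,
      ← Algebra.TensorProduct.one_def, map_one]
  · -- Q * Qinv = 1
    rw [show ((1:H) ⊗ₜ[R] F) * lc F * (lc Finv * ((1:H) ⊗ₜ[R] Finv))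
      = ((1:H) ⊗ₜ[R] F) * lc (F * Finv) * ((1:H) ⊗ₜ[R] Finv) by
        rw [lT_comul_mul]; simp [mul_assoc]; rfl]
    rw [hFinv.1, hlc, lT_comul_one, mul_one, Algebra.TensorProduct.tmul_mul_tmul,
      hFinv.1, one_mul, ← Algebra.TensorProduct.one_def]
  · -- φ commutes with d
    have := hφcomm x
    rw [hφ] at this
    calc (A (rc Finv) * A (Finv ⊗ₜ[R] (1:H)) * (((1:H) ⊗ₜ[R] F) * lc F)) * d
        = (A (rc Finv) * A (Finv ⊗ₜ[R] (1:H)) * ((1:H) ⊗ₜ[R] F) * lc F) * d := by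
          simp [mul_assoc]
      _ = d * (A (rc Finv) * A (Finv ⊗ₜ[R] (1:H)) * ((1:H) ⊗ₜ[R] F) * lc F) := this
      _ = d * (A (rc Finv) * A (Finv ⊗ₜ[R] (1:H)) * (((1:H) ⊗ₜ[R] F) * lc F)) := by
          simp [mul_assoc]


/-- Let `H` be cocommutative, `F` invertible and counital,
`φ = ((Δ⊗id)F⁻¹)·(F⁻¹⊗1)·(1⊗F)·((id⊗Δ)F)` the coassociator, and `Δ_h(x) = FΔ(x)F⁻¹`.
If `((Δ_h⊗id)∘Δ_h)(x)·φ = φ·((id⊗Δ_h)∘Δ_h)(x)` for all `x`, and `φ` commutes with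
the image of the twofold coproduct `Δ⁽²⁾`, then `Δ_h` is coassociative. -/
theorem stmt_5 (R : Type*) [CommRing R] (H : Type*) [Ring H] [HopfAlgebra R H]
    (hcocomm : (TensorProduct.comm R H H).toLinearMap ∘ₗ Coalgebra.comul
      = (Coalgebra.comul (R := R) (A := H)))
    (F Finv : H ⊗[R] H)
    (hFinv : F * Finv = 1 ∧ Finv * F = 1)
    (hcounit1 : (TensorProduct.lid R H) ((Coalgebra.counit.rTensor H) F) = 1)
    (hcounit2 : (TensorProduct.rid R H) ((Coalgebra.counit.lTensor H) F) = 1)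
    (φ : H ⊗[R] (H ⊗[R] H))
    (hφ : φ =
      (Algebra.TensorProduct.assoc R R R H H H) ((LinearMap.rTensor H Coalgebra.comul) Finv) *
      (Algebra.TensorProduct.assoc R R R H H H) (Finv ⊗ₜ[R] (1 : H)) *
      ((1 : H) ⊗ₜ[R] F) *
      ((LinearMap.lTensor H Coalgebra.comul) F))
    (Δh : H →ₗ[R] H ⊗[R] H)
    (hΔh : Δh = (LinearMap.mulRight R Finv) ∘ₗ (LinearMap.mulLeft R F) ∘ₗ Coalgebra.comul)
    (hintertwine : ∀ x : H,
      (TensorProduct.assoc R H H H) ((LinearMap.rTensor H Δh) (Δh x)) * φ =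
        φ * (LinearMap.lTensor H Δh) (Δh x))
    (hφcomm : ∀ x : H,
      φ * (Algebra.TensorProduct.assoc R R R H H H)
          ((LinearMap.rTensor H Coalgebra.comul) (Coalgebra.comul x)) =
      (Algebra.TensorProduct.assoc R R R H H H)
          ((LinearMap.rTensor H Coalgebra.comul) (Coalgebra.comul x)) * φ) :
    ∀ x : H,
      (TensorProduct.assoc R H H H) ((LinearMap.rTensor H Δh) (Δh x)) =
        (LinearMap.lTensor H Δh) (Δh x) := by
  exact stmt_5_aux R H F Finv hFinv φ hφ Δh hΔh hφcomm
end

section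
/- In the two-dimensional boson algebra (CCR) over ℂ[[h]] with q = e^h, define Ã⁺_↑ = √((n^↑)_{q²}/n^↑)·q^{n^↓}·a⁺_↑, Ã⁺_↓ = √((n^↓)_{q²}/n^↓)·a⁺_↓, Ã^↑ = a^↑·√((n^↑)_{q²}/n^↑)·q^{n^↓}, Ã^↓ = a^↓·√((n^↓)_{q²}/n^↓), where (x)_{q²} = (q^{2x}−1)/(q²−1). Then Ã^↓ Ã^↑ = q Ã^↑ Ã^↓ and Ã⁺_↑ Ã⁺_↓ = q Ã⁺_↓ Ã⁺_↑. -/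
/-- In the two-dimensional boson algebra over `ℂ[[h]]` with `q = e^h`
(realized, as the context allows, through the two-mode Fock basis action:
`a^↑ e(m₁,m₂) = √m₁ • e(m₁−1,m₂)`, `a⁺_↑ e(m₁,m₂) = √(m₁+1) • e(m₁+1,m₂)`, etc.,
`gU, gD` the operators `√((n^↑)_{q²}/n^↑)`, `√((n^↓)_{q²}/n^↓)` and `qD = q^{n^↓}`),
the elements `Ã⁺_↑ = gU·qD·a⁺_↑`, `Ã⁺_↓ = gD·a⁺_↓`, `Ã^↑ = a^↑·gU·qD`,
`Ã^↓ = a^↓·gD` satisfy `Ã^↓Ã^↑ = q Ã^↑Ã^↓` and `Ã⁺_↑Ã⁺_↓ = q Ã⁺_↓Ã⁺_↑`. -/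
theorem stmt_12 (V : Type*) [AddCommGroup V] [Module (PowerSeries ℂ) V]
    (e : ℕ × ℕ → V)
    (au ad cu cd gU gD qD : V →ₗ[PowerSeries ℂ] V)
    (s : ℕ → PowerSeries ℂ) (q : PowerSeries ℂ)
    (hq : q = PowerSeries.exp ℂ)
    (hau : ∀ m : ℕ × ℕ, au (e m) =
      (PowerSeries.C (Real.sqrt m.1 : ℂ)) • e (m.1 - 1, m.2))
    (hcu : ∀ m : ℕ × ℕ, cu (e m) =
      (PowerSeries.C (Real.sqrt (m.1 + 1) : ℂ)) • e (m.1 + 1, m.2))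
    (had : ∀ m : ℕ × ℕ, ad (e m) =
      (PowerSeries.C (Real.sqrt m.2 : ℂ)) • e (m.1, m.2 - 1))
    (hcd : ∀ m : ℕ × ℕ, cd (e m) =
      (PowerSeries.C (Real.sqrt (m.2 + 1) : ℂ)) • e (m.1, m.2 + 1))
    (hgU : ∀ m : ℕ × ℕ, gU (e m) = s m.1 • e m)
    (hgD : ∀ m : ℕ × ℕ, gD (e m) = s m.2 • e m)
    (hqD : ∀ m : ℕ × ℕ, qD (e m) = q ^ m.2 • e m)
    (hs : ∀ m : ℕ, (s m) ^ 2 * (m : PowerSeries ℂ) = ∑ k ∈ Finset.range m, q ^ (2 * k))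
    (AU AD CU CD : V →ₗ[PowerSeries ℂ] V)
    (hAU : AU = au ∘ₗ gU ∘ₗ qD) (hAD : AD = ad ∘ₗ gD)
    (hCU : CU = gU ∘ₗ qD ∘ₗ cu) (hCD : CD = gD ∘ₗ cd) :
    (∀ m : ℕ × ℕ, AD (AU (e m)) = q • AU (AD (e m))) ∧
    (∀ m : ℕ × ℕ, CU (CD (e m)) = q • CD (CU (e m))) := by
  subst hAU hAD hCU hCD
  constructor
  · rintro ⟨m1, m2⟩
    cases m2 with
    | zero =>
      simp only [LinearMap.comp_apply, hqD, hgU, hgD, hau, had, map_smul, smul_smul]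
      simp
    | succ k =>
      simp only [LinearMap.comp_apply, hqD, hgU, hgD, hau, had, map_smul, smul_smul]
      simp only [Nat.add_sub_cancel]
      congr 1; ring
  · rintro ⟨m1, m2⟩
    simp only [LinearMap.comp_apply, hqD, hgU, hgD, hcu, hcd, map_smul, smul_smul]
    congr 1; ring
end

section
/- In the two-dimensional fermion algebra (CAR) with generators a⁺_↑, a⁺_↓, a^↑, a^↓ and q an invertible scalar, define Ã⁺_↑ = q^{−n^↓}a⁺_↑, Ã⁺_↓ = a⁺_↓, Ã^↑ = a^↑q^{−n^↓}, Ã^↓ = a^↓, where n^↓ = a⁺_↓a^↓ and q^{−n^↓} := 1 + (q^{−1}−1)n^↓. Then these elements satisfy the q-deformed Clifford relations: Ã^↑Ã⁺_↑ = 1 − Ã⁺_↑Ã^↑ + (q^{−2}−1)Ã⁺_↓Ã^↓, Ã^↓Ã⁺_↓ = 1 − Ã⁺_↓Ã^↓, Ã^↑Ã⁺_↓ = −q^{−1}Ã⁺_↓Ã^↑, Ã^↓Ã⁺_↑ = −q^{−1}Ã⁺_↑Ã^↓, Ã^↓Ã^↑ = −q^{−1}Ã^↑Ã^↓, (Ã^↑)²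 = (Ã^↓)² = 0, Ã⁺_↑Ã⁺_↓ = −q^{−1}Ã⁺_↓Ã⁺_↑, (Ã⁺_↑)² = (Ã⁺_↓)² = 0. -/
/-- In the two-dimensional fermion algebra (CAR) with `q` invertible,
the elements `Ã⁺_↑ = q^{−n↓}a⁺_↑`, `Ã⁺_↓ = a⁺_↓`, `Ã^↑ = a^↑q^{−n↓}`, `Ã^↓ = a^↓`
(where `n↓ = a⁺_↓a^↓` and `q^{−n↓} = 1 + (q⁻¹−1)n↓`) satisfy the q-deformed
Clifford relations. -/
theorem stmt_14 (K : Type*) [Field K] (A : Type*) [Ring A] [Algebra K A]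
    (q : K) (hq : q ≠ 0)
    (au ad cu cd : A)
    -- CAR: {aⁱ,aʲ} = 0, {a⁺_i,a⁺_j} = 0, {aⁱ,a⁺_j} = δⁱⱼ
    (h1 : au * ad + ad * au = 0) (h2 : au * au = 0) (h3 : ad * ad = 0)
    (h4 : cu * cd + cd * cu = 0) (h5 : cu * cu = 0) (h6 : cd * cd = 0)
    (h7 : au * cu + cu * au = 1) (h8 : ad * cd + cd * ad = 1)
    (h9 : au * cd + cd * au = 0) (h10 : ad * cu + cu * ad = 0)
    (Qd : A) (hQd : Qd = 1 + (q⁻¹ - 1) • (cd * ad))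
    (tCU tCD tAU tAD : A)
    (htCU : tCU = Qd * cu) (htCD : tCD = cd)
    (htAU : tAU = au * Qd) (htAD : tAD = ad) :
    tAU * tCU = 1 - tCU * tAU + ((q⁻¹) ^ 2 - 1) • (tCD * tAD) ∧
    tAD * tCD = 1 - tCD * tAD ∧
    tAU * tCD = -(q⁻¹ • (tCD * tAU)) ∧
    tAD * tCU = -(q⁻¹ • (tCU * tAD)) ∧
    tAD * tAU = -(q⁻¹ • (tAU * tAD)) ∧
    tAU * tAU = 0 ∧ tAD * tAD = 0 ∧
    tCU * tCD = -(q⁻¹ • (tCD * tCU)) ∧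
    tCU * tCU = 0 ∧ tCD * tCD = 0 := by
  rw [htCU, htCD, htAU, htAD, hQd]
  -- binary normal-form rewrites
  have e1 : ad * au = -(au * ad) := by rw [eq_neg_iff_add_eq_zero]; rw [add_comm]; exact h1
  have e2 : cd * cu = -(cu * cd) := by rw [eq_neg_iff_add_eq_zero]; rw [add_comm]; exact h4
  have e3 : au * cd = -(cd * au) := by rw [eq_neg_iff_add_eq_zero]; exact h9
  have e4 : ad * cu = -(cu * ad) := by rw [eq_neg_iff_add_eq_zero]; exact h10
  have e5 : au * cu = 1 - cu * au := by rw [eq_sub_iff_add_eq]; exact h7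
  have e6 : ad * cd = 1 - cd * ad := by rw [eq_sub_iff_add_eq]; exact h8
  -- trailing variants
  have f1 : ∀ x : A, ad * (au * x) = -(au * (ad * x)) := fun x => by
    rw [← mul_assoc, e1, ← mul_assoc]; simp
  have f2 : ∀ x : A, cd * (cu * x) = -(cu * (cd * x)) := fun x => by
    rw [← mul_assoc, e2, ← mul_assoc]; simp
  have f3 : ∀ x : A, au * (cd * x) = -(cd * (au * x)) := fun x => by
    rw [← mul_assoc, e3, ← mul_assoc]; simp
  have f4 : ∀ x : A, ad * (cu * x) = -(cu * (ad * x)) := fun x => by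
    rw [← mul_assoc, e4, ← mul_assoc]; simp
  have f5 : ∀ x : A, au * (cu * x) = x - cu * (au * x) := fun x => by
    rw [← mul_assoc, e5, sub_mul, one_mul, ← mul_assoc]
  have f6 : ∀ x : A, ad * (cd * x) = x - cd * (ad * x) := fun x => by
    rw [← mul_assoc, e6, sub_mul, one_mul, ← mul_assoc]
  have g1 : ∀ x : A, au * (au * x) = 0 := fun x => by rw [← mul_assoc, h2, zero_mul]
  have g2 : ∀ x : A, ad * (ad * x) = 0 := fun x => by rw [← mul_assoc, h3, zero_mul]
  have g3 : ∀ x : A, cu * (cu * x) = 0 := fun x => by rw [← mul_assoc, h5, zero_mul]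
  have g4 : ∀ x : A, cd * (cd * x) = 0 := fun x => by rw [← mul_assoc, h6, zero_mul]
  refine ⟨?_, ?_, ?_, ?_, ?_, ?_, ?_, ?_, ?_, ?_⟩ <;>
  · simp only [mul_add, add_mul, mul_sub, sub_mul, mul_one, one_mul, mul_assoc,
      smul_mul_assoc, mul_smul_comm, mul_neg, neg_mul, smul_add, smul_sub, smul_neg,
      smul_smul, e1, e2, e3, e4, e5, e6, f1, f2, f3, f4, f5, f6, g1, g2, g3, g4,
      h2, h3, h5, h6, mul_zero, zero_mul, smul_zero, neg_neg, sub_zero, zero_sub,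
      add_zero, zero_add, neg_zero, mul_neg, neg_mul]
    try (match_scalars <;> (field_simp; try ring; try linear_combination (1 - q^2) * (q^4*q⁻¹^4 + q^3*q⁻¹^3 + q^2*q⁻¹^2 + q*q⁻¹ + 1) * mul_inv_cancel₀ hq))
end
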